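/- Let p be a positive integer and suppose f(t) = ∑_{i∈ℤ/pℤ} t^{n_i} and g(t) = ∑_{i∈ℤ/pℤ} t^{n_i + p·m_i} are Laurent polynomials over ℤ, where for each residue class i, n_i ≡ i (mod p) and m_i ∈ ℤ. If (t^p − 1)² divides g(t) − f(t) in ℤ[t, t⁻¹], then m_i = 0 for all i, i.e. f = g. -/

import Mathlib

set_option synthInstance.maxHeartbeats 1000000
set_option maxHeartbeats 1000000
open LaurentPolynomial Polynomial TrivSqZeroExt DualNumber

noncomputable section AuxLDTS

variable (p : ℕ)

def AuxQ (p : ℕ) : Type := Polynomial ℤ ⧸ Ideal.span {(X : Polynomial ℤ)^p - 1}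

instance : CommRing (AuxQ p) := inferInstanceAs (CommRing (Polynomial ℤ ⧸ Ideal.span {(X : Polynomial ℤ)^p - 1}))

/-- quotient map -/
def auxMk : Polynomial ℤ →+* AuxQ p := Ideal.Quotient.mk _

def auxX : AuxQ p := auxMk p X

lemma auxX_pow_p : (auxX p)^p = 1 := by
  have h2 : (auxX p)^p - 1 = 0 := by
    rw [auxX, ← map_pow, ← map_one (auxMk p), ← map_sub]
    exact Ideal.Quotient.eq_zero_iff_mem.2 (Ideal.subset_span rfl)
  linear_combination h2

variable (hp : 0 < p)

/-- `x` as a unit of `AuxQ p`. -/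
def auxUx : (AuxQ p)ˣ where
  val := auxX p
  inv := (auxX p)^(p-1)
  val_inv := by
    rw [← pow_succ']
    have h : p - 1 + 1 = p := by omega
    rw [h, auxX_pow_p]
  inv_val := by
    rw [← pow_succ]
    have h : p - 1 + 1 = p := by omega
    rw [h, auxX_pow_p]

lemma auxUx_pow_p : (auxUx p hp)^p = 1 := by
  ext
  rw [Units.val_pow_eq_pow_val]
  exact auxX_pow_p p

/-- the unit `1 + ε` of the dual numbers. -/
def auxE1 : (DualNumber (AuxQ p))ˣ where
  val := 1 + ε
  inv := 1 - ε
  val_inv := by linear_combination (-1 : DualNumber (AuxQ p)) * eps_mul_eps (R := AuxQ p)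
  inv_val := by linear_combination (-1 : DualNumber (AuxQ p)) * eps_mul_eps (R := AuxQ p)

lemma auxE1_zpow (k : ℤ) : ((auxE1 p ^ k : (DualNumber (AuxQ p))ˣ) : DualNumber (AuxQ p))
    = 1 + inl (k : AuxQ p) * ε := by
  have h0 : (ε : DualNumber (AuxQ p)) * ε = 0 := eps_mul_eps
  have hn : ∀ nn : ℕ, ((auxE1 p ^ nn : (DualNumber (AuxQ p))ˣ) : DualNumber (AuxQ p))
      = 1 + inl (nn : AuxQ p) * ε := by
    intro nn
    induction nn with
    | zero => simp
    | succ k ih =>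
      rw [pow_succ, Units.val_mul, ih]
      have h1 : (auxE1 p : DualNumber (AuxQ p)) = 1 + ε := rfl
      have h2 : (inl ((k : AuxQ p) + 1) : DualNumber (AuxQ p)) = inl (k : AuxQ p) + 1 := by
        rw [inl_add, inl_one]
      push_cast
      rw [h1, h2]
      linear_combination (inl (k : AuxQ p) : DualNumber (AuxQ p)) * h0
  obtain ⟨nn, rfl | rfl⟩ := Int.eq_nat_or_neg k
  · rw [zpow_natCast, hn]; norm_num
  · rw [zpow_neg, zpow_natCast]
    have hinv : ((auxE1 p ^ nn)⁻¹ : (DualNumber (AuxQ p))ˣ).val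
        = 1 - inl (nn : AuxQ p) * ε := by
      apply Units.inv_eq_of_mul_eq_one_right
      rw [hn]
      linear_combination (- inl (nn : AuxQ p) * inl (nn : AuxQ p) : DualNumber (AuxQ p)) * h0
    rw [hinv]
    push_cast
    rw [inl_neg]
    ring

end AuxLDTS

noncomputable section Aux2

open TrivSqZeroExt

variable (p : ℕ) (hp : 0 < p)

/-- The full unit `x(1+ε)`. -/
def auxU : (DualNumber (AuxQ p))ˣ :=
  Units.map (inlHom (AuxQ p) (AuxQ p) : AuxQ p →* DualNumber (AuxQ p)) (auxUx p hp) * auxE1 p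

/-- The evaluation homomorphism. -/
def auxPhi : LaurentPolynomial ℤ →ₐ[ℤ] DualNumber (AuxQ p) :=
  AddMonoidAlgebra.lift ℤ _ ℤ ((Units.coeHom _).comp (zpowersHom _ (auxU p hp)))

lemma auxPhi_T (k : ℤ) : auxPhi p hp (LaurentPolynomial.T k)
    = inl (((auxUx p hp ^ k : (AuxQ p)ˣ) : AuxQ p))
      * (1 + inl (k : AuxQ p) * ε) := by
  have h1 : (LaurentPolynomial.T k : LaurentPolynomial ℤ)
      = AddMonoidAlgebra.single k 1 := rfl
  rw [auxPhi, h1, AddMonoidAlgebra.lift_single, one_smul]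
  have h2 : ((Units.coeHom (DualNumber (AuxQ p))).comp
      (zpowersHom _ (auxU p hp))) (Multiplicative.ofAdd k)
      = ((auxU p hp ^ k : (DualNumber (AuxQ p))ˣ) : DualNumber (AuxQ p)) := rfl
  have h3 : auxU p hp ^ k
      = Units.map (inlHom (AuxQ p) (AuxQ p) : AuxQ p →* DualNumber (AuxQ p)) (auxUx p hp ^ k)
        * auxE1 p ^ k := by
    rw [auxU]
    refine (mul_zpow ((Units.map (inlHom (AuxQ p) (AuxQ p) : AuxQ p →* DualNumber (AuxQ p)))
      (auxUx p hp)) (auxE1 p) k).trans ?_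
    exact congrArg (fun z => z * auxE1 p ^ k)
      (map_zpow (Units.map (inlHom (AuxQ p) (AuxQ p) : AuxQ p →* DualNumber (AuxQ p)))
        (auxUx p hp) k).symm
  rw [h2, h3, Units.val_mul, auxE1_zpow]
  rfl

end Aux2

noncomputable section Aux3
open TrivSqZeroExt
variable (p : ℕ) (hp : 0 < p)

lemma auxUx_zpow_congr (k l : ℤ) (h : k % (p : ℤ) = l % (p : ℤ)) :
    auxUx p hp ^ k = auxUx p hp ^ l := by
  have hd : (p : ℤ) ∣ k - l := Int.dvd_of_emod_eq_zero
    (by rw [Int.sub_emod, h, sub_self, Int.zero_emod])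
  obtain ⟨c, hc⟩ := hd
  have hk : k = l + (p : ℤ) * c := by omega
  rw [hk, zpow_add, zpow_mul, zpow_natCast, auxUx_pow_p, one_zpow, mul_one]

lemma auxPhi_sq_zero : auxPhi p hp ((LaurentPolynomial.T (p : ℤ) - 1)^2) = 0 := by
  have h0 : (ε : DualNumber (AuxQ p)) * ε = 0 := eps_mul_eps
  rw [map_pow, map_sub, map_one, auxPhi_T]
  have h1 : auxUx p hp ^ (p : ℤ) = 1 := by
    rw [zpow_natCast, auxUx_pow_p]
  rw [h1, Units.val_one, inl_one, one_mul]
  have : (1 : DualNumber (AuxQ p)) + inl ((p : ℤ) : AuxQ p) * ε - 1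
      = inl ((p : ℤ) : AuxQ p) * ε := by ring
  rw [this]
  linear_combination (inl ((p:ℤ) : AuxQ p) * inl ((p:ℤ) : AuxQ p) : DualNumber (AuxQ p)) * h0

lemma auxSnd_phi_T (k : ℤ) : snd (auxPhi p hp (LaurentPolynomial.T k))
    = ((auxUx p hp ^ k : (AuxQ p)ˣ) : AuxQ p) * (k : AuxQ p) := by
  rw [auxPhi_T]
  rw [mul_add, mul_one, ← mul_assoc, ← inl_mul]
  rw [snd_add, snd_inl]
  have : (inl (((auxUx p hp ^ k : (AuxQ p)ˣ) : AuxQ p) * ((k : ℤ) : AuxQ p))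
      : DualNumber (AuxQ p)) * ε = inr (((auxUx p hp ^ k : (AuxQ p)ˣ) : AuxQ p) * (k : AuxQ p)) := by
    rw [inl_mul_eq_smul, inr_eq_smul_eps]
  rw [this, snd_inr, zero_add]

end Aux3


/-- Let `p` be a positive integer and suppose
`f(t) = ∑_{i ∈ ℤ/pℤ} t^{n_i}` and `g(t) = ∑_{i ∈ ℤ/pℤ} t^{n_i + p·m_i}` are Laurent polynomials
over `ℤ`, where `n_i ≡ i (mod p)` for each residue class `i`, and `m_i ∈ ℤ`. If `(t^p − 1)²`
divides `g − f` in `ℤ[t, t⁻¹]`, then `m_i = 0` for all `i`, i.e. `f = g`. -/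
theorem laurent_divisible_by_tp_sub_one_sq (p : ℕ) (hp : 0 < p)
    (n m : Fin p → ℤ) (hn : ∀ i : Fin p, n i % (p : ℤ) = (i : ℤ))
    (hdvd : ((LaurentPolynomial.T (p : ℤ) - 1) ^ 2 : LaurentPolynomial ℤ) ∣
      ((∑ i : Fin p, (LaurentPolynomial.T (n i + (p : ℤ) * m i) : LaurentPolynomial ℤ)) -
        ∑ i : Fin p, (LaurentPolynomial.T (n i) : LaurentPolynomial ℤ))) :
    (∀ i : Fin p, m i = 0) ∧
    (∑ i : Fin p, (LaurentPolynomial.T (n i + (p : ℤ) * m i) : LaurentPolynomial ℤ)) =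
      ∑ i : Fin p, (LaurentPolynomial.T (n i) : LaurentPolynomial ℤ) := by
  have key : ∀ i : Fin p, m i = 0 := by
    obtain ⟨c, hc⟩ := hdvd
    have h0 : auxPhi p hp ((∑ i : Fin p, (LaurentPolynomial.T (n i + (p : ℤ) * m i)
        : LaurentPolynomial ℤ)) - ∑ i : Fin p, LaurentPolynomial.T (n i)) = 0 := by
      rw [hc, map_mul, auxPhi_sq_zero, zero_mul]
    -- the ε-component of the image
    have hsnd := congrArg TrivSqZeroExt.snd h0
    rw [map_sub, map_sum, map_sum] at hsnd
    rw [TrivSqZeroExt.snd_sub, TrivSqZeroExt.snd_sum, TrivSqZeroExt.snd_sum,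
      TrivSqZeroExt.snd_zero] at hsnd
    simp only [auxSnd_phi_T] at hsnd
    -- rewrite the unit powers in terms of `auxX p ^ i`
    have hpow : ∀ i : Fin p, ∀ k : ℤ, k % (p : ℤ) = (i : ℤ) →
        ((auxUx p hp ^ k : (AuxQ p)ˣ) : AuxQ p) = auxX p ^ (i : ℕ) := by
      intro i k hk
      have h1 : auxUx p hp ^ k = auxUx p hp ^ ((i : ℕ) : ℤ) := by
        apply auxUx_zpow_congr
        rw [hk, Int.emod_eq_of_lt (by positivity) (by exact_mod_cast i.isLt)]
      rw [h1, zpow_natCast, Units.val_pow_eq_pow_val]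
      rfl
    have hQ : ∑ i : Fin p, (auxX p) ^ (i : ℕ) * (((p : ℤ) * m i : ℤ) : AuxQ p) = 0 := by
      have e1 : ∀ i : Fin p,
          ((auxUx p hp ^ (n i + (p : ℤ) * m i) : (AuxQ p)ˣ) : AuxQ p)
            = auxX p ^ (i : ℕ) := by
        intro i
        apply hpow i
        rw [Int.add_mul_emod_self_left, hn i]
      have e2 : ∀ i : Fin p,
          ((auxUx p hp ^ (n i) : (AuxQ p)ˣ) : AuxQ p) = auxX p ^ (i : ℕ) :=
        fun i => hpow i _ (hn i)
      simp only [e1, e2] at hsnd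
      rw [← Finset.sum_sub_distrib] at hsnd
      rw [← hsnd]
      apply Finset.sum_congr rfl
      intro i _
      rw [← mul_sub]
      congr 1
      push_cast
      ring
    -- lift to ℤ[X]
    set q : Polynomial ℤ := ∑ i : Fin p, Polynomial.C ((p : ℤ) * m i) * X ^ (i : ℕ) with hq
    have hmkq : auxMk p q = 0 := by
      rw [hq, map_sum, ← hQ]
      apply Finset.sum_congr rfl
      intro i _
      rw [map_mul, map_pow, mul_comm]
      have hC : auxMk p (Polynomial.C ((p : ℤ) * m i)) = (((p : ℤ) * m i : ℤ) : AuxQ p) :=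
        eq_intCast ((auxMk p).comp Polynomial.C) _
      rw [hC]
      rfl
    have hdvdq : ((X : Polynomial ℤ) ^ p - 1) ∣ q := by
      rw [← Ideal.mem_span_singleton]
      exact (Ideal.Quotient.eq_zero_iff_mem).1 hmkq
    have hdegq : q.degree < ((X : Polynomial ℤ) ^ p - 1).degree := by
      have hd1 : ((X : Polynomial ℤ) ^ p - 1).degree = (p : WithBot ℕ) := by
        have := Polynomial.degree_X_pow_sub_C (R := ℤ) hp (1 : ℤ)
        simpa using this
      rw [hd1, hq]
      refine lt_of_le_of_lt (Polynomial.degree_sum_le _ _) ?_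
      rw [Finset.sup_lt_iff (by exact_mod_cast WithBot.bot_lt_coe p)]
      intro i _
      refine lt_of_le_of_lt (Polynomial.degree_C_mul_X_pow_le _ _) ?_
      exact_mod_cast i.isLt
    have hq0 : q = 0 := Polynomial.eq_zero_of_dvd_of_degree_lt hdvdq hdegq
    intro i
    have hco := congrArg (fun r => Polynomial.coeff r (i : ℕ)) hq0
    simp only [hq, Polynomial.finset_sum_coeff, Polynomial.coeff_C_mul_X_pow,
      Polynomial.coeff_zero] at hco
    rw [Finset.sum_eq_single i] at hco
    · simp only [if_pos rfl] at hco
      have hp' : (p : ℤ) ≠ 0 := by exact_mod_cast hp.ne'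
      rcases mul_eq_zero.1 hco with h | h
      · exact absurd h hp'
      · exact h
    · intro j _ hj
      rw [if_neg]
      intro hij
      exact hj (Fin.ext hij.symm)
    · intro h
      exact absurd (Finset.mem_univ i) h
  refine ⟨key, ?_⟩
  apply Finset.sum_congr rfl
  intro i _
  rw [key i, mul_zero, add_zero]
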